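/- arXiv:1806.10223 — 3 statements merged into one kernel-verified Lean document; each statement's English description precedes it below -/
import Mathlib

section
/- The partition counting function P(N,k,l) (number of partitions of N into at most l parts, each part at most k) satisfies the recurrence P(N,k,l) = P(N−k−l+1, k−1, l−1) + P(N,k−1,l) + P(N,k,l−1) − P(N,k−1,l−1) for all N,k,l ≥ 1. -/
open Finset

/-- The degree sequence (as a multiset) of a simple graph on `Fin n`. -/
noncomputable def degSeq {n : ℕ} (G : SimpleGraph (Fin n)) : Multiset ℕ :=
  Finset.univ.val.map fun v => Nat.card {w // G.Adj v w}

/-- Number of graphical degree sequences of length `n`, allowing zero terms. -/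
noncomputable def numD0 (n : ℕ) : ℕ :=
  Set.ncard {M : Multiset ℕ | ∃ G : SimpleGraph (Fin n), degSeq G = M}

/-- Number of zero-free graphical degree sequences of length `n`. -/
noncomputable def numD (n : ℕ) : ℕ :=
  Set.ncard {M : Multiset ℕ | (∀ x ∈ M, 0 < x) ∧ ∃ G : SimpleGraph (Fin n), degSeq G = M}

/-- Number of zero-free graphical degree sequences of length `n` with largest part `< n-1`. -/
noncomputable def numL (n : ℕ) : ℕ :=
  Set.ncard {M : Multiset ℕ | (∀ x ∈ M, 0 < x ∧ x < n - 1) ∧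
    ∃ G : SimpleGraph (Fin n), degSeq G = M}

/-- Number of graphical partitions of `N` with exactly `n` parts and largest part `< n-1`. -/
noncomputable def numL' (N n : ℕ) : ℕ :=
  Set.ncard {M : Multiset ℕ | M.sum = N ∧ Multiset.card M = n ∧ (∀ x ∈ M, 0 < x ∧ x < n - 1) ∧
    ∃ G : SimpleGraph (Fin n), degSeq G = M}

/-- The `i`-th largest part (1-indexed) of the partition given by the multiset `M`. -/
def prt (M : Multiset ℕ) (i : ℕ) : ℕ := (M.sort (· ≤ ·)).reverse.getD (i - 1) 0

/-- The `i`-th part (1-indexed) of the conjugate partition of `M`. -/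
def conjPrt (M : Multiset ℕ) (i : ℕ) : ℕ := Multiset.card (M.filter fun x => i ≤ x)

/-- The side length of the Durfee square of `M`. -/
def durfee (M : Multiset ℕ) : ℕ :=
  ((Finset.Icc 1 (Multiset.card M)).filter fun i => i ≤ prt M i).card

/-- The `i`-th corank `rᵢ(π) = πᵢ' - πᵢ` of the partition `M`. -/
def corank (M : Multiset ℕ) (i : ℕ) : ℤ := (conjPrt M i : ℤ) - (prt M i : ℤ)

/-- The Barnes–Savage corank condition with parameter `s`. -/
def corankCond (M : Multiset ℕ) (s : ℤ) : Prop :=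
  ∀ j : ℕ, 1 ≤ j → j ≤ durfee M → (j : ℤ) ≤ s + ∑ i ∈ Finset.Icc 1 j, corank M i

/-- Partitions of `N` into at most `l` parts with each part at most `k`. -/
def PboxSet (N : ℤ) (k l : ℕ) : Set (Multiset ℕ) :=
  {M | (M.sum : ℤ) = N ∧ Multiset.card M ≤ l ∧ ∀ x ∈ M, 0 < x ∧ x ≤ k}

/-- `P(N,k,l)`: number of partitions of `N` into at most `l` parts with each part at most `k`. -/
noncomputable def Pcount (N : ℤ) (k l : ℕ) : ℕ := Set.ncard (PboxSet N k l)

/-- The Barnes–Savage set `P(N,k,l,s)`. -/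
def PBSset (N : ℤ) (k l : ℕ) (s : ℤ) : Set (Multiset ℕ) :=
  if s < 0 then ∅ else {M ∈ PboxSet N k l | corankCond M s}

/-- The Barnes–Savage function `P(N,k,l,s)`. -/
noncomputable def PBScount (N : ℤ) (k l : ℕ) (s : ℤ) : ℕ := Set.ncard (PBSset N k l s)

/-- Values `j - ∑_{i=1}^j rᵢ(π)` over partitions `π ∈ P(N,k,l)` and `1 ≤ j ≤ d(π)`. -/
def valSet (N k l : ℕ) : Set ℤ :=
  {v | ∃ M ∈ PboxSet (N : ℤ) k l, ∃ j : ℕ, 1 ≤ j ∧ j ≤ durfee M ∧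
    v = (j : ℤ) - ∑ i ∈ Finset.Icc 1 j, corank M i}

/-- Same values, over partitions of `N` with parts at most `k` (any number of parts). -/
def valSetU (N k : ℕ) : Set ℤ :=
  {v | ∃ M : Multiset ℕ, M.sum = N ∧ (∀ x ∈ M, 0 < x ∧ x ≤ k) ∧ ∃ j : ℕ, 1 ≤ j ∧
    j ≤ durfee M ∧ v = (j : ℤ) - ∑ i ∈ Finset.Icc 1 j, corank M i}

/-- Same values, over partitions of `N` into at most `l` parts (parts unbounded). -/
def valSetL (N l : ℕ) : Set ℤ :=
  {v | ∃ M : Multiset ℕ, M.sum = N ∧ Multiset.card M ≤ l ∧ (∀ x ∈ M, 0 < x) ∧ ∃ j : ℕ, 1 ≤ j ∧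
    j ≤ durfee M ∧ v = (j : ℤ) - ∑ i ∈ Finset.Icc 1 j, corank M i}

/-- The partition of `N` with as many parts equal to `k` as possible. -/
def maxPart (N k : ℕ) : Multiset ℕ :=
  Multiset.replicate (N / k) k + (if N % k = 0 then 0 else {N % k})

/-- The partition of `N` (at most `l` parts) whose conjugate has as many parts `= l` as possible. -/
def minPart (N l : ℕ) : Multiset ℕ :=
  (Multiset.replicate (N % l) (N / l + 1) + Multiset.replicate (l - N % l) (N / l)).filter (0 < ·)

/-- The function `M'(N,k)` of Algorithm 2. -/
def Mfun (N k : ℕ) : ℕ :=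
  if N = 0 ∨ k = 0 then 0
  else if k < N / k then 0
  else if N % k = 0 then (N / k) * (k - N / k + 1)
  else if N % k ≤ N / k then (N / k) * (k - N / k + 1) - N % k
  else (N / k) * (k - N / k - 1) + N % k

/-! Sort the partitions in the `k × l` box by whether they contain a part equal to `k`,
and those that do by whether they have exactly `l` parts; inclusion–exclusion turns this into the
last three terms. A partition with a part `k` and exactly `l` parts contains the full first row and
first column of the box, a hook of size `k + l - 1`; deleting the hook is a bijection onto the
partitions of `N - k - l + 1` in the `(k - 1) × (l - 1)` box. -/

lemma finite_PboxSet (N : ℤ) (k l : ℕ) : (PboxSet N k l).Finite := by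
  refine (Set.finite_range fun p : Nat.Partition N.toNat => p.parts).subset ?_
  rintro M ⟨hsum, -, hparts⟩
  exact ⟨⟨M, fun hx => (hparts _ hx).1, by omega⟩, rfl⟩

lemma PboxSet_diff_mem (N : ℤ) (k l : ℕ) :
    PboxSet N k l \ {M | k ∈ M} = PboxSet N (k - 1) l := by
  ext M
  simp only [PboxSet, Set.mem_sdiff, Set.mem_ofPred_eq]
  constructor
  · rintro ⟨⟨hsum, hcard, hparts⟩, hk⟩
    refine ⟨hsum, hcard, fun x hx => ⟨(hparts x hx).1, ?_⟩⟩
    have hxk : x ≠ k := by rintro rfl; exact hk hx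
    have := (hparts x hx).2
    omega
  · rintro ⟨hsum, hcard, hparts⟩
    refine ⟨⟨hsum, hcard, fun x hx => ⟨(hparts x hx).1, by have := (hparts x hx).2; omega⟩⟩, ?_⟩
    intro hk
    have := hparts k hk
    omega

lemma PboxSet_inter_mem_diff_card (N : ℤ) (k l : ℕ) :
    (PboxSet N k l ∩ {M | k ∈ M}) \ {M | Multiset.card M = l} =
      PboxSet N k (l - 1) ∩ {M | k ∈ M} := by
  ext M
  simp only [PboxSet, Set.mem_sdiff, Set.mem_inter_iff, Set.mem_ofPred_eq]
  constructor
  · rintro ⟨⟨⟨hsum, hcard, hparts⟩, hk⟩, hl⟩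
    exact ⟨⟨hsum, by omega, hparts⟩, hk⟩
  · rintro ⟨⟨hsum, hcard, hparts⟩, hk⟩
    have : 0 < Multiset.card M := Multiset.card_pos_iff_exists_mem.mpr ⟨k, hk⟩
    exact ⟨⟨⟨hsum, by omega, hparts⟩, hk⟩, by omega⟩

def removeHook (k : ℕ) (M : Multiset ℕ) : Multiset ℕ :=
  ((M.erase k).map (· - 1)).filter (0 < ·)

/-- The `l - 1 - card M` parts equal to `1` complete the first column to length `l`. -/
def addHook (k l : ℕ) (M : Multiset ℕ) : Multiset ℕ :=
  k ::ₘ (M.map (· + 1) + Multiset.replicate (l - 1 - Multiset.card M) 1)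

lemma removeHook_addHook (k l : ℕ) {M : Multiset ℕ} (hM : ∀ x ∈ M, 0 < x) :
    removeHook k (addHook k l M) = M := by
  have hpos : M.filter (0 < ·) = M := Multiset.filter_eq_self.mpr hM
  simp only [removeHook, addHook, Multiset.erase_cons_head, Multiset.map_add, Multiset.map_map,
    Multiset.map_replicate, Multiset.filter_add]
  simpa [hpos] using fun a ha => Multiset.eq_of_mem_replicate ha

lemma addHook_removeHook {k : ℕ} {M : Multiset ℕ} (hk : k ∈ M) (hM : ∀ x ∈ M, 0 < x) :
    addHook k (Multiset.card M) (removeHook k M) = M := by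
  set R := M.erase k
  set S := R.map (· - 1)
  have hRS : S.map (· + 1) = R := by
    have : ∀ x ∈ R, x - 1 + 1 = x := fun x hx => by
      have := hM x (Multiset.mem_of_mem_erase hx)
      omega
    simp [S, Multiset.map_map, Multiset.map_congr rfl this]
  have hzeros : S.filter (¬ 0 < ·) =
      Multiset.replicate (Multiset.card S - Multiset.card (S.filter (0 < ·))) 0 := by
    rw [Multiset.eq_replicate]
    refine ⟨?_, fun b hb => by have := (Multiset.mem_filter.mp hb).2; omega⟩
    have := congrArg Multiset.card (Multiset.filter_add_not (0 < ·) S)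
    simp only [Multiset.card_add] at this
    omega
  have hcardS : Multiset.card S = Multiset.card M - 1 := by
    simp [S, R, Multiset.card_erase_of_mem hk]
  calc addHook k (Multiset.card M) (removeHook k M)
      = k ::ₘ (S.filter (0 < ·) + S.filter (¬ 0 < ·)).map (· + 1) := by
        rw [hzeros, Multiset.map_add, Multiset.map_replicate, hcardS]
        rfl
    _ = M := by rw [Multiset.filter_add_not, hRS, Multiset.cons_erase hk]

lemma card_addHook (k l : ℕ) (M : Multiset ℕ) :
    Multiset.card (addHook k l M) = Multiset.card M + 1 + (l - 1 - Multiset.card M) := by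
  simp only [addHook, Multiset.card_cons, Multiset.card_add, Multiset.card_map,
    Multiset.card_replicate]
  omega

lemma sum_addHook (k l : ℕ) (M : Multiset ℕ) :
    (addHook k l M).sum = k + M.sum + Multiset.card M + (l - 1 - Multiset.card M) := by
  simp only [addHook, Multiset.sum_cons, Multiset.sum_add, Multiset.sum_map_add, Multiset.map_id',
    Multiset.map_const', Multiset.sum_replicate, smul_eq_mul, mul_one]
  omega

lemma eq_or_of_mem_addHook {k l x : ℕ} {M : Multiset ℕ} (hx : x ∈ addHook k l M) :
    x = k ∨ (∃ y ∈ M, x = y + 1) ∨ x = 1 := by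
  simp only [addHook, Multiset.mem_cons, Multiset.mem_add, Multiset.mem_map] at hx
  rcases hx with rfl | ⟨y, hy, rfl⟩ | hx
  · exact Or.inl rfl
  · exact Or.inr (Or.inl ⟨y, hy, rfl⟩)
  · exact Or.inr (Or.inr (Multiset.eq_of_mem_replicate hx))

lemma mapsTo_addHook (N : ℤ) {k l : ℕ} (hk : 1 ≤ k) (hl : 1 ≤ l) :
    Set.MapsTo (addHook k l) (PboxSet (N - k - l + 1) (k - 1) (l - 1))
      (PboxSet N k l ∩ {M | k ∈ M} ∩ {M | Multiset.card M = l}) := by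
  rintro M ⟨hsum, hcard, hparts⟩
  have hcard' : Multiset.card (addHook k l M) = l := by rw [card_addHook]; omega
  refine ⟨⟨⟨?_, hcard'.le, fun x hx => ?_⟩, Multiset.mem_cons_self k _⟩, hcard'⟩
  · have : (addHook k l M).sum = k + M.sum + (l - 1) := by rw [sum_addHook]; omega
    rw [this]
    omega
  · rcases eq_or_of_mem_addHook hx with rfl | ⟨y, hy, rfl⟩ | rfl
    · omega
    · have := hparts y hy
      omega
    · omega

lemma mapsTo_removeHook (N : ℤ) (k l : ℕ) :
    Set.MapsTo (removeHook k) (PboxSet N k l ∩ {M | k ∈ M} ∩ {M | Multiset.card M = l})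
      (PboxSet (N - k - l + 1) (k - 1) (l - 1)) := by
  rintro M ⟨⟨⟨hsum, -, hparts⟩, hk⟩, rfl⟩
  have hM := addHook_removeHook hk fun x hx => (hparts x hx).1
  have hcard := card_addHook k (Multiset.card M) (removeHook k M)
  rw [hM] at hcard
  refine ⟨?_, by omega, fun x hx => ?_⟩
  · have hsum' := sum_addHook k (Multiset.card M) (removeHook k M)
    rw [hM] at hsum'
    omega
  · obtain ⟨hx, hxpos⟩ := Multiset.mem_filter.mp hx
    obtain ⟨y, hy, rfl⟩ := Multiset.mem_map.mp hx
    have := hparts y (Multiset.mem_of_mem_erase hy)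
    omega

lemma ncard_PboxSet_inter_mem_inter_card (N : ℤ) {k l : ℕ} (hk : 1 ≤ k) (hl : 1 ≤ l) :
    (PboxSet N k l ∩ {M | k ∈ M} ∩ {M | Multiset.card M = l}).ncard =
      Pcount (N - k - l + 1) (k - 1) (l - 1) := by
  refine ((Set.InvOn.bijOn ?_ (mapsTo_addHook N hk hl) (mapsTo_removeHook N k l)).ncard_eq).symm
  refine ⟨fun M hM => removeHook_addHook k l fun x hx => (hM.2.2 x hx).1, ?_⟩
  rintro M ⟨⟨⟨-, -, hparts⟩, hk⟩, rfl⟩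
  exact addHook_removeHook hk fun x hx => (hparts x hx).1

lemma ncard_PboxSet_inter_mem_add_Pcount (N : ℤ) (k l : ℕ) :
    (PboxSet N k l ∩ {M | k ∈ M}).ncard + Pcount N (k - 1) l = Pcount N k l := by
  rw [Pcount, ← PboxSet_diff_mem]
  exact Set.ncard_inter_add_ncard_sdiff_eq_ncard _ _ (finite_PboxSet N k l)

lemma ncard_PboxSet_inter_mem (N : ℤ) {k l : ℕ} (hk : 1 ≤ k) (hl : 1 ≤ l) :
    (PboxSet N k l ∩ {M | k ∈ M}).ncard =
      Pcount (N - k - l + 1) (k - 1) (l - 1) + (PboxSet N k (l - 1) ∩ {M | k ∈ M}).ncard := by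
  rw [← ncard_PboxSet_inter_mem_inter_card N hk hl, ← PboxSet_inter_mem_diff_card]
  exact (Set.ncard_inter_add_ncard_sdiff_eq_ncard _ _ ((finite_PboxSet N k l).inter_of_left _)).symm

theorem stmt4_general (N : ℤ) (k l : ℕ) (hk : 1 ≤ k) (hl : 1 ≤ l) :
    (Pcount N k l : ℤ) =
      Pcount (N - k - l + 1) (k - 1) (l - 1) + Pcount N (k - 1) l + Pcount N k (l - 1)
        - Pcount N (k - 1) (l - 1) := by
  have hsplit := ncard_PboxSet_inter_mem_add_Pcount N k l
  have hsplit_pred := ncard_PboxSet_inter_mem_add_Pcount N k (l - 1)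
  have hhook := ncard_PboxSet_inter_mem N hk hl
  omega

/-- The recurrence `P(N,k,l) = P(N-k-l+1,k-1,l-1) + P(N,k-1,l) + P(N,k,l-1) - P(N,k-1,l-1)`. -/
theorem stmt4 (N : ℤ) (k l : ℕ) (hN : 1 ≤ N) (hk : 1 ≤ k) (hl : 1 ≤ l) :
    (Pcount N k l : ℤ) =
      Pcount (N - k - l + 1) (k - 1) (l - 1) + Pcount N (k - 1) l + Pcount N k (l - 1)
        - Pcount N (k - 1) (l - 1) :=
  stmt4_general N k l hk hl
end

section
/- Let N, k be positive integers with k ≥ ⌊N/k⌋, write q = ⌊N/k⌋ and r = N mod k. If r = 0 then the maximum of j − ∑_{i=1}^{j} rᵢ(π) over partitions π of N with largest part at most k (and any number of parts) and 1 ≤ j ≤ d(π) equals q(k−q+1). If r > 0 and r ≤ q, the maximum equals q(k−q+1) − r; if r > 0 and r > q, it equals q(k−q−1) + r. -/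
open Finset

/-!
Let `j ≤ d(π)`. Since `∑_{i ≤ j} π'ᵢ = ∑ₓ min(x, j)` and the `j` largest parts are all `≥ j`,
the quantity `j - ∑_{i ≤ j} rᵢ(π)` equals `j + A - j² - ∑_{tail} min(x, j)`, where `A ≤ jk` is
the sum of the `j` largest parts and the remaining parts (the tail) sum to `N - A`. As tail parts
are at most `k`, the tail term is at least `j ⌊R/k⌋ + min(R mod k, j)` for `R = N - A`. For
`j ≤ q` this bounds the quantity by `j(k - q + 1) - min(r, j)`; for `j > q`, dropping the tail
bounds it by `j + N - j²`. Both are at most the claimed value, which `π*` attains at `j = q`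
if `r ≤ q` and at `j = q + 1` if `r > q`.
-/

lemma sum_Icc_sub_one {β : Type*} [AddCommMonoid β] (g : ℕ → β) (n : ℕ) :
    ∑ i ∈ Icc 1 n, g (i - 1) = ∑ i ∈ range n, g i := by
  induction n with
  | zero => simp
  | succ n ih => rw [sum_Icc_succ_top (by omega), ih, sum_range_succ, Nat.add_sub_cancel]

lemma sum_map_eq_sum_prt {β : Type*} [AddCommMonoid β] (M : Multiset ℕ) (f : ℕ → β) :
    (M.map f).sum = ∑ i ∈ Icc 1 (Multiset.card M), f (prt M i) := by
  set L := (M.sort (· ≤ ·)).reverse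
  have hM : (L : Multiset ℕ) = M := by simp [L]
  have hlen : Multiset.card M = L.length := by rw [← hM, Multiset.coe_card]
  conv_lhs => rw [← hM]
  change _ = ∑ i ∈ Icc 1 _, f (L.getD (i - 1) 0)
  rw [Multiset.map_coe, Multiset.sum_coe, hlen, sum_Icc_sub_one (fun i => f (L.getD i 0)),
    ← Fin.sum_univ_fun_getElem, ← Fin.sum_univ_eq_sum_range (fun i => f (L.getD i 0))]
  simp

lemma conjPrt_cons (a : ℕ) (M : Multiset ℕ) (i : ℕ) :
    conjPrt (a ::ₘ M) i = (if i ≤ a then 1 else 0) + conjPrt M i := by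
  simp only [conjPrt, Multiset.filter_cons, Multiset.card_add]
  split_ifs <;> simp

lemma sum_Icc_conjPrt (M : Multiset ℕ) (j : ℕ) :
    ∑ i ∈ Icc 1 j, conjPrt M i = (M.map (min · j)).sum := by
  induction M using Multiset.induction with
  | empty => simp [conjPrt]
  | cons a M ih =>
    have hcount : #{i ∈ Icc 1 j | i ≤ a} = min a j := by
      rw [show {i ∈ Icc 1 j | i ≤ a} = Icc 1 (min a j) by ext; simp; omega]
      simp
    simp only [conjPrt_cons, sum_add_distrib, sum_boole, ih, Multiset.map_cons,
      Multiset.sum_cons, hcount, Nat.cast_id]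

lemma prt_antitone (M : Multiset ℕ) : Antitone (prt M) := by
  intro i i' h
  have hs : ((M.sort (· ≤ ·)).reverse).Pairwise (· ≥ ·) :=
    List.pairwise_reverse.mpr (Multiset.pairwise_sort M _)
  unfold prt
  rcases lt_or_ge (i' - 1) (M.sort (· ≤ ·)).reverse.length with h' | h'
  · rw [List.getD_eq_getElem _ _ h', List.getD_eq_getElem _ _ (by omega)]
    exact hs.rel_get_of_le (a := ⟨i - 1, by omega⟩) (b := ⟨i' - 1, h'⟩) (by simp; omega)
  · rw [List.getD_eq_default _ _ h']
    exact Nat.zero_le _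

lemma prt_le {M : Multiset ℕ} {k : ℕ} (h : ∀ x ∈ M, x ≤ k) (i : ℕ) : prt M i ≤ k := by
  unfold prt
  rcases lt_or_ge (i - 1) (M.sort (· ≤ ·)).reverse.length with h' | h'
  · rw [List.getD_eq_getElem _ _ h']
    exact h _ ((Multiset.mem_sort _).mp (List.mem_reverse.mp (List.getElem_mem h')))
  · rw [List.getD_eq_default _ _ h']
    exact Nat.zero_le _

lemma le_durfee_iff (M : Multiset ℕ) (j : ℕ) :
    j ≤ durfee M ↔ j ≤ Multiset.card M ∧ j ≤ prt M j := by
  unfold durfee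
  constructor
  · intro h
    by_contra hc
    have hsub : {i ∈ Icc 1 (Multiset.card M) | i ≤ prt M i} ⊆ Icc 1 (j - 1) := fun i hi => by
      simp only [mem_Icc, mem_filter] at hi ⊢
      refine ⟨hi.1.1, ?_⟩
      by_contra hij
      exact hc ⟨by omega, (show j ≤ i by omega).trans (hi.2.trans (prt_antitone M (by omega)))⟩
    have := card_le_card hsub
    simp only [Nat.card_Icc] at this
    omega
  · rintro ⟨hcard, hprt⟩
    calc j = #(Icc 1 j) := by simp
      _ ≤ _ := card_le_card fun i hi => by
        simp only [mem_Icc, mem_filter] at hi ⊢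
        exact ⟨⟨hi.1, hi.2.trans hcard⟩, hi.2.trans (hprt.trans (prt_antitone M hi.2))⟩

lemma sub_sum_corank_eq (M : Multiset ℕ) (j : ℕ) :
    (j : ℤ) - ∑ i ∈ Icc 1 j, corank M i =
      j + ((∑ i ∈ Icc 1 j, prt M i : ℕ) : ℤ) - ((M.map (min · j)).sum : ℕ) := by
  simp only [corank, sum_sub_distrib, ← sum_Icc_conjPrt]
  push_cast
  ring

-- The least value of `∑ min xᵢ j` over parts `xᵢ ≤ k` summing to `R`, when `j ≤ k`.
def minTruncSum (k j R : ℕ) : ℕ := j * (R / k) + min (R % k) j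

lemma minTruncSum_mono (k j : ℕ) : Monotone (minTruncSum k j) := by
  intro R R' h
  unfold minTruncSum
  rcases (Nat.div_le_div_right (c := k) h).lt_or_eq with hlt | heq
  · have : j * (R / k + 1) ≤ j * (R' / k) := Nat.mul_le_mul_left _ hlt
    rw [Nat.mul_succ] at this
    omega
  · have := Nat.div_add_mod R k
    have := Nat.div_add_mod R' k
    rw [heq] at *
    omega

lemma minTruncSum_mul_add {k r : ℕ} (hr : r < k) (j m : ℕ) :
    minTruncSum k j (k * m + r) = j * m + min r j := by
  simp [minTruncSum, Nat.mul_add_div (by omega : 0 < k), Nat.div_eq_of_lt hr, Nat.mod_eq_of_lt hr]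

lemma minTruncSum_add_le {k j a : ℕ} (hk : 0 < k) (hjk : j ≤ k) (ha : a ≤ k) (S : ℕ) :
    minTruncSum k j (a + S) ≤ min a j + minTruncSum k j S := by
  have hS := Nat.div_add_mod S k
  have hs := Nat.mod_lt S hk
  rcases lt_or_ge (a + S % k) k with h | h
  · rw [show a + S = k * (S / k) + (a + S % k) by omega, minTruncSum_mul_add h, minTruncSum]
    omega
  · rw [show a + S = k * (S / k + 1) + (a + S % k - k) by rw [Nat.mul_succ]; omega,
      minTruncSum_mul_add (by omega), minTruncSum, Nat.mul_succ]
    omega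

lemma minTruncSum_le_sum_min {k j : ℕ} (hk : 0 < k) (hjk : j ≤ k) {ι : Type*} (s : Finset ι)
    {x : ι → ℕ} (hx : ∀ i ∈ s, x i ≤ k) :
    minTruncSum k j (∑ i ∈ s, x i) ≤ ∑ i ∈ s, min (x i) j := by
  induction s using Finset.cons_induction with
  | empty => simp [minTruncSum]
  | cons a s _ ih =>
    rw [sum_cons, sum_cons]
    grw [minTruncSum_add_le hk hjk (hx a (mem_cons_self a s)),
      ih fun i hi => hx i (mem_cons_of_mem hi)]

-- The value attained by `maxPart N k` when `q = N / k` and `r = N % k`.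
def extremalValue (k q r : ℕ) : ℤ :=
  if r ≤ q then q * ((k : ℤ) - q + 1) - r else q * ((k : ℤ) - q - 1) + r

lemma mul_sub_min_le_extremalValue {k q r j : ℕ} (hjq : j ≤ q) (hqk : q ≤ k) :
    (j : ℤ) * (k - q + 1) - min (r : ℤ) j ≤ extremalValue k q r := by
  have hprod : 0 ≤ ((q : ℤ) - j) * (k - q) := mul_nonneg (by omega) (by omega)
  unfold extremalValue
  split_ifs with hrq
  · have : (r : ℤ) - min (r : ℤ) j ≤ q - j := by omega
    linarith
  · rw [min_eq_right (by omega)]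
    linarith

lemma add_sub_mul_le_extremalValue {k q r j : ℕ} (hqj : q < j) :
    (j : ℤ) + k * q + r - j * j ≤ extremalValue k q r := by
  have hprod : 0 ≤ ((j : ℤ) - q - 1) * (j + q) := mul_nonneg (by omega) (by omega)
  unfold extremalValue
  split_ifs with hrq
  · have : (r : ℤ) ≤ q := by exact_mod_cast hrq
    linarith
  · linarith

lemma add_sub_sub_minTruncSum_le {k q r j A R : ℕ} (hqk : q ≤ k) (hr : r < k)
    (hA : A ≤ j * k) (hS : A + R = k * q + r) :
    (j : ℤ) + A - j * j - minTruncSum k j R ≤ extremalValue k q r := by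
  rcases le_or_gt j q with hjq | hqj
  · have hkq : k * (q - j) + k * j = k * q := by rw [← Nat.mul_add, Nat.sub_add_cancel hjq]
    have hR := minTruncSum_mono k j (show k * (q - j) + r ≤ R by rw [mul_comm] at hA; omega)
    rw [minTruncSum_mul_add hr] at hR
    have hR' : ((j * (q - j) + min r j : ℕ) : ℤ) ≤ minTruncSum k j R := by exact_mod_cast hR
    push_cast [Nat.cast_sub hjq] at hR'
    calc (j : ℤ) + A - j * j - minTruncSum k j R ≤ j * (k - q + 1) - min (r : ℤ) j := by
          have : (A : ℤ) ≤ j * k := by exact_mod_cast hA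
          linarith
      _ ≤ extremalValue k q r := mul_sub_min_le_extremalValue hjq hqk
  · calc (j : ℤ) + A - j * j - minTruncSum k j R ≤ j + k * q + r - j * j := by
          have : (A : ℤ) + R = k * q + r := by exact_mod_cast hS
          linarith [(minTruncSum k j R).cast_nonneg (α := ℤ), R.cast_nonneg (α := ℤ)]
      _ ≤ extremalValue k q r := add_sub_mul_le_extremalValue hqj

lemma add_sum_sub_sum_min_le_extremalValue {p : ℕ → ℕ} {k n j : ℕ} (hj : 1 ≤ j) (hjn : j ≤ n)
    (hpk : ∀ i, p i ≤ k) (hpj : ∀ i ∈ Icc 1 j, j ≤ p i)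
    (hq : (∑ i ∈ Icc 1 n, p i) / k ≤ k) :
    (j : ℤ) + ((∑ i ∈ Icc 1 j, p i : ℕ) : ℤ) - ((∑ i ∈ Icc 1 n, min (p i) j : ℕ) : ℤ) ≤
      extremalValue k ((∑ i ∈ Icc 1 n, p i) / k) ((∑ i ∈ Icc 1 n, p i) % k) := by
  have hjk : j ≤ k := (hpj j (by simp [hj])).trans (hpk j)
  have hsplit (f : ℕ → ℕ) : ∑ i ∈ Icc 1 n, f i = ∑ i ∈ Icc 1 j, f i + ∑ i ∈ Ioc j n, f i := by
    have hIcc (m : ℕ) : Icc 1 m = Ioc 0 m := Icc_add_one_left_eq_Ioc 0 m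
    rw [hIcc, hIcc, sum_Ioc_consecutive _ (Nat.zero_le j) hjn]
  have hhead : ∑ i ∈ Icc 1 j, min (p i) j = j * j := by
    rw [sum_congr rfl fun i hi => min_eq_right (hpj i hi)]
    simp
  have hA : ∑ i ∈ Icc 1 j, p i ≤ j * k := by
    simpa using sum_le_card_nsmul (Icc 1 j) p k fun i _ => hpk i
  have htail := minTruncSum_le_sum_min (j := j) (by omega) hjk (Ioc j n) fun i _ => hpk i
  have key := add_sub_sub_minTruncSum_le hq (Nat.mod_lt _ (by omega)) hA
    ((hsplit p).symm.trans (Nat.div_add_mod _ k).symm)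
  rw [hsplit fun i => min (p i) j, hhead]
  push_cast at htail key ⊢
  linarith

lemma le_extremalValue_of_mem_valSetU {N k : ℕ} (hq : N / k ≤ k) {v : ℤ} (hv : v ∈ valSetU N k) :
    v ≤ extremalValue k (N / k) (N % k) := by
  obtain ⟨M, rfl, hM, j, hj, hjd, rfl⟩ := hv
  obtain ⟨hjn, hjp⟩ := (le_durfee_iff M j).mp hjd
  have hsum : M.sum = ∑ i ∈ Icc 1 (Multiset.card M), prt M i := by
    simpa using sum_map_eq_sum_prt M id
  rw [hsum] at hq
  rw [sub_sum_corank_eq, sum_map_eq_sum_prt, hsum]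
  exact add_sum_sub_sum_min_le_extremalValue hj hjn (prt_le fun x hx => (hM x hx).2)
    (fun i hi => hjp.trans (prt_antitone M (mem_Icc.mp hi).2)) hq

lemma prt_coe_of_pairwise {l : List ℕ} (hl : l.Pairwise (· ≥ ·)) (i : ℕ) :
    prt l i = l.getD (i - 1) 0 := by
  unfold prt
  congr
  refine List.Perm.eq_of_pairwise' (List.pairwise_reverse.mpr (Multiset.pairwise_sort _ _)) hl ?_
  exact (List.reverse_perm _).trans (List.mergeSort_perm _ _)

lemma maxPart_eq_coe (N k : ℕ) :
    maxPart N k = ↑(List.replicate (N / k) k ++ if N % k = 0 then [] else [N % k]) := by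
  unfold maxPart
  split_ifs <;> simp [← Multiset.coe_add, Multiset.coe_replicate]

lemma prt_maxPart {N k : ℕ} (hk : 0 < k) (i : ℕ) :
    prt (maxPart N k) i =
      (List.replicate (N / k) k ++ if N % k = 0 then [] else [N % k]).getD (i - 1) 0 := by
  have := Nat.mod_lt N hk
  rw [maxPart_eq_coe]
  refine prt_coe_of_pairwise (List.pairwise_append.mpr ⟨List.pairwise_replicate.mpr
    (Or.inr le_rfl), by split_ifs <;> simp, fun x hx y hy => ?_⟩) i
  rw [List.eq_of_mem_replicate hx]
  split_ifs at hy <;> simp at hy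
  omega

lemma prt_maxPart_of_le {N k i : ℕ} (hk : 0 < k) (hi : i ∈ Icc 1 (N / k)) :
    prt (maxPart N k) i = k := by
  rw [mem_Icc] at hi
  rw [prt_maxPart hk, List.getD_append _ _ _ _ (by simp; omega),
    List.getD_eq_getElem _ _ (by simp; omega), List.getElem_replicate]

lemma prt_maxPart_succ {N k : ℕ} (hk : 0 < k) : prt (maxPart N k) (N / k + 1) = N % k := by
  rw [prt_maxPart hk, List.getD_append_right _ _ _ _ (by simp)]
  split_ifs <;> simp [*]

lemma sum_maxPart (N k : ℕ) : (maxPart N k).sum = N := by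
  unfold maxPart
  have := Nat.div_add_mod' N k
  split_ifs with h <;> simp <;> omega

lemma card_maxPart (N k : ℕ) :
    Multiset.card (maxPart N k) = N / k + if N % k = 0 then 0 else 1 := by
  unfold maxPart
  split_ifs <;> simp

lemma mem_maxPart {N k x : ℕ} (hk : 0 < k) (hx : x ∈ maxPart N k) : 0 < x ∧ x ≤ k := by
  unfold maxPart at hx
  rcases Multiset.mem_add.mp hx with h | h
  · rw [Multiset.eq_of_mem_replicate h]
    exact ⟨hk, le_rfl⟩
  · have := Nat.mod_lt N hk
    split_ifs at h <;> simp at h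
    omega

lemma sum_map_min_maxPart (N k j : ℕ) :
    ((maxPart N k).map (min · j)).sum = N / k * min k j + min (N % k) j := by
  unfold maxPart
  split_ifs with h <;> simp [h]

lemma extremalValue_mem_valSetU {N k : ℕ} (hN : 0 < N) (hk : 0 < k) (hq : N / k ≤ k) :
    extremalValue k (N / k) (N % k) ∈ valSetU N k := by
  have hr := Nat.mod_lt N hk
  refine ⟨maxPart N k, sum_maxPart N k, fun x hx => mem_maxPart hk hx, ?_⟩
  rcases le_or_gt (N % k) (N / k) with hrq | hqr
  · have hq1 : 1 ≤ N / k := by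
      by_contra! h0
      have := Nat.div_add_mod N k
      rw [Nat.lt_one_iff.mp h0] at hrq this
      omega
    refine ⟨N / k, hq1, (le_durfee_iff _ _).mpr ⟨by simp [card_maxPart],
      (prt_maxPart_of_le hk (by simp [hq1])).ge.trans' hq⟩, ?_⟩
    rw [sub_sum_corank_eq, sum_congr rfl fun i hi => prt_maxPart_of_le hk hi,
      sum_map_min_maxPart, extremalValue, if_pos hrq, min_eq_right hq, min_eq_left hrq]
    simp
    ring
  · have hr0 : N % k ≠ 0 := (Nat.zero_le _).trans_lt hqr |>.ne'
    refine ⟨N / k + 1, Nat.le_add_left 1 _, (le_durfee_iff _ _).mpr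
      ⟨by rw [card_maxPart, if_neg hr0], by rw [prt_maxPart_succ hk]; exact hqr⟩, ?_⟩
    rw [sub_sum_corank_eq, sum_Icc_succ_top (Nat.le_add_left 1 _), prt_maxPart_succ hk,
      sum_congr rfl fun i hi => prt_maxPart_of_le hk hi, sum_map_min_maxPart, extremalValue,
      if_neg (not_le.mpr hqr), min_eq_right (hqr.trans hr), min_eq_right hqr]
    simp
    ring

lemma isGreatest_valSetU {N k : ℕ} (hN : 0 < N) (hk : 0 < k) (hq : N / k ≤ k) :
    IsGreatest (valSetU N k) (extremalValue k (N / k) (N % k)) :=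
  ⟨extremalValue_mem_valSetU hN hk hq, fun _ hv => le_extremalValue_of_mem_valSetU hq hv⟩

/-- Explicit formula for `M(N,k)` (case `k ≥ ⌊N/k⌋`). -/
theorem stmt8 (N k : ℕ) (hN : 1 ≤ N) (hk : 1 ≤ k) (hq : N / k ≤ k) :
    (N % k = 0 → sSup (valSetU N k) = ((N / k : ℕ) : ℤ) * ((k : ℤ) - (N / k : ℕ) + 1)) ∧
    (N % k ≠ 0 → N % k ≤ N / k →
      sSup (valSetU N k) = ((N / k : ℕ) : ℤ) * ((k : ℤ) - (N / k : ℕ) + 1) - ((N % k : ℕ) : ℤ)) ∧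
    (N % k ≠ 0 → N / k < N % k →
      sSup (valSetU N k) = ((N / k : ℕ) : ℤ) * ((k : ℤ) - (N / k : ℕ) - 1) + ((N % k : ℕ) : ℤ)) := by
  rw [(isGreatest_valSetU hN hk hq).csSup_eq, extremalValue]
  refine ⟨fun hr => ?_, fun _ hr => if_pos hr, fun _ hr => if_neg (not_le.mpr hr)⟩
  simp [hr]
end

section
/- Let f₁(n) = 2(n−2)(n(n−3)/2+1)² and let f₄(n) be the total allocation size ∑_{l=0}^{1} ∑_{k=0}^{n−3} ∑_{N=0}^{min{k(n−1), ⌊(n²+3)/2−2n⌋}} (M′(N,k)+1), where M′(N,k) is as defined below. Then there exist constants 0 < c₁ < c₂ < 1 (one may take c₁ = 1/192 and c₂ = 7/12) such that c₁·f₁(n) ≤ f₄(n) ≤ c₂·f₁(n) for all sufficiently large n; in particular f₄(n) = Θ(n⁵). -/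
open Finset

/-- Total allocation size `f₁(n)` of the original algorithm. -/
def f1 (n : ℕ) : ℕ := 2 * (n - 2) * (n * (n - 3) / 2 + 1) ^ 2

/-- Total allocation size `f₄(n)` of the improved algorithm. -/
def f4 (n : ℕ) : ℕ :=
  ∑ l ∈ Finset.range 2, ∑ k ∈ Finset.range (n - 2),
    ∑ N ∈ Finset.range (min (k * (n - 1)) ((n ^ 2 + 3) / 2 - 2 * n) + 1), (Mfun N k + 1)

/-
Write `f₄(n) = 2 ∑_{k < n-2} R(n,k)`, where `R(n,k)` sums `M'(N,k) + 1` over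
`N ≤ min(k(n-1), B)` with `B = ⌊(n²+3)/2⌋ - 2n ≈ n²/2`, and `2 f₁(n) = (n-2)(n-1)²(n-2)² ≈ n⁵`.

Upper bound: with `q = ⌊N/k⌋`, `M'(N,k)` is at most `q(k-q+1)` or `(q+1)(k-q)`, both `≤ (k+1)²/4`
by AM-GM, so `2 f₄(n) ≤ (n-2)(B+1)((n-2)²+4) ≈ n⁵/2`.

Lower bound: `M'(N,k) ≥ q(k-q)`. Put `j = ⌊n/8⌋`; for `4j ≤ k < 7j` and `kj ≤ N < 3kj` we have
`j ≤ q < 3j`, hence `M'(N,k) ≥ 3j²`, and all these `N` lie in the summation range. Summing gives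
`f₄(n) ≥ 144 j⁵ ≈ n⁵/228`, which exceeds `f₁(n)/192 ≈ n⁵/384` once `j ≥ 10`.
-/

theorem exists_add_eq_and_Mfun_le_mul (N k : ℕ) :
    ∃ x y, x + y = k + 1 ∧ Mfun N k ≤ x * y := by
  unfold Mfun
  split_ifs with h0 hq hr hrq
  · exact ⟨0, k + 1, by simp, by simp⟩
  · exact ⟨0, k + 1, by simp, by simp⟩
  · exact ⟨N / k, k - N / k + 1, by omega, le_rfl⟩
  · exact ⟨N / k, k - N / k + 1, by omega, Nat.sub_le _ _⟩
  · -- `N / k < N % k < k` here, so `N / k < k`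
    have hk : N % k < k := Nat.mod_lt _ (by omega)
    refine ⟨N / k + 1, k - N / k, by omega, ?_⟩
    obtain ⟨d, hd⟩ : ∃ d, k - N / k = d + 1 := ⟨k - N / k - 1, by omega⟩
    rw [hd, Nat.add_sub_cancel]
    have : N % k ≤ N / k + d := by omega
    nlinarith

theorem four_mul_Mfun_le (N k : ℕ) : 4 * Mfun N k ≤ (k + 1) ^ 2 := by
  obtain ⟨x, y, hxy, hM⟩ := exists_add_eq_and_Mfun_le_mul N k
  calc 4 * Mfun N k ≤ 4 * x * y := by rw [mul_assoc]; exact Nat.mul_le_mul_left 4 hM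
    _ ≤ (k + 1) ^ 2 := hxy ▸ four_mul_le_sq_add x y

theorem div_mul_sub_div_le_Mfun {N k : ℕ} (h : N / k ≤ k) : N / k * (k - N / k) ≤ Mfun N k := by
  unfold Mfun
  split_ifs with h0 hq hr hrq
  · rcases h0 with h0 | h0 <;> simp [h0]
  · omega
  · exact Nat.mul_le_mul_left _ (by omega)
  · have : N / k * (k - N / k + 1) = N / k * (k - N / k) + N / k := by ring
    omega
  · obtain ⟨d, hd⟩ : ∃ d, k - N / k = d := ⟨_, rfl⟩
    rw [hd]
    rcases d with _ | d
    · simp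
    · rw [Nat.add_sub_cancel]
      nlinarith

theorem three_mul_sq_le_Mfun {j k N : ℕ} (hk : 4 * j ≤ k) (hlo : k * j ≤ N)
    (hhi : N < k * (3 * j)) : 3 * j ^ 2 ≤ Mfun N k := by
  rcases Nat.eq_zero_or_pos j with rfl | hj
  · simp
  have hk0 : 0 < k := by omega
  have hq_lo : j ≤ N / k := (Nat.le_div_iff_mul_le hk0).mpr (by rw [mul_comm]; exact hlo)
  have hq_hi : N / k < 3 * j := (Nat.div_lt_iff_lt_mul hk0).mpr (by rw [mul_comm]; exact hhi)
  -- `q (k - q) ≥ q (4j - q) = 3j² + (q - j)(3j - q)` for `j ≤ q ≤ 3j`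
  calc 3 * j ^ 2 ≤ N / k * (k - N / k) := by
        obtain ⟨u, hu⟩ : ∃ u, N / k = j + u := ⟨N / k - j, by omega⟩
        obtain ⟨v, hv⟩ : ∃ v, k = 4 * j + v := ⟨k - 4 * j, by omega⟩
        rw [hu, hv, show 4 * j + v - (j + u) = (3 * j - u) + v by omega]
        have : u ≤ 3 * j := by omega
        obtain ⟨w, hw⟩ : ∃ w, 3 * j = u + w := ⟨3 * j - u, by omega⟩
        rw [hw, Nat.add_sub_cancel_left]
        nlinarith
    _ ≤ Mfun N k := div_mul_sub_div_le_Mfun (by omega)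

def f4Row (n k : ℕ) : ℕ :=
  ∑ N ∈ range (min (k * (n - 1)) ((n ^ 2 + 3) / 2 - 2 * n) + 1), (Mfun N k + 1)

theorem f4_eq_two_mul_sum_f4Row (n : ℕ) : f4 n = 2 * ∑ k ∈ range (n - 2), f4Row n k := by
  simp only [f4, f4Row, sum_const, card_range, smul_eq_mul]

theorem two_mul_f1 (n : ℕ) : 2 * f1 n = (n - 2) * (2 * (n * (n - 3) / 2 + 1)) ^ 2 := by
  rw [f1]; ring

theorem two_mul_f1_le (n : ℕ) : 2 * f1 n ≤ n ^ 5 := by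
  rcases lt_or_ge n 3 with hn | hn
  · interval_cases n <;> decide
  obtain ⟨t, rfl⟩ : ∃ t, n = t + 3 := ⟨n - 3, by omega⟩
  have hC : 2 * ((t + 3) * (t + 3 - 3) / 2 + 1) ≤ (t + 3) ^ 2 := by
    have := Nat.mul_div_le ((t + 3) * t) 2
    have : (t + 3) ^ 2 = (t + 3) * t + 3 * t + 9 := by ring
    rw [Nat.add_sub_cancel]
    omega
  calc 2 * f1 (t + 3) = (t + 3 - 2) * (2 * ((t + 3) * (t + 3 - 3) / 2 + 1)) ^ 2 := two_mul_f1 _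
    _ ≤ (t + 3) * ((t + 3) ^ 2) ^ 2 := by gcongr; omega
    _ = (t + 3) ^ 5 := by ring

theorem four_mul_f4Row_le (n k : ℕ) :
    4 * f4Row n k ≤ ((n ^ 2 + 3) / 2 - 2 * n + 1) * ((k + 1) ^ 2 + 4) := by
  rw [f4Row, mul_sum]
  calc ∑ N ∈ range (min (k * (n - 1)) ((n ^ 2 + 3) / 2 - 2 * n) + 1), 4 * (Mfun N k + 1)
      ≤ #(range (min (k * (n - 1)) ((n ^ 2 + 3) / 2 - 2 * n) + 1)) * ((k + 1) ^ 2 + 4) :=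
        sum_le_card_nsmul _ _ _ fun N _ => by have := four_mul_Mfun_le N k; omega
    _ ≤ _ := by rw [card_range]; gcongr; exact min_le_right _ _

theorem two_mul_f4_le (n : ℕ) :
    2 * f4 n ≤ (n - 2) * ((n ^ 2 + 3) / 2 - 2 * n + 1) * ((n - 2) ^ 2 + 4) := by
  have hrow : ∀ k ∈ range (n - 2),
      4 * f4Row n k ≤ ((n ^ 2 + 3) / 2 - 2 * n + 1) * ((n - 2) ^ 2 + 4) := fun k hk =>
    (four_mul_f4Row_le n k).trans (by gcongr; exact mem_range.mp hk)
  have := sum_le_card_nsmul _ _ _ hrow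
  rw [← mul_sum, card_range, smul_eq_mul] at this
  rw [f4_eq_two_mul_sum_f4Row]
  nlinarith

theorem twelve_mul_f4_le (n : ℕ) (hn : 5 ≤ n) : 12 * f4 n ≤ 7 * f1 n := by
  obtain ⟨t, rfl⟩ : ∃ t, n = t + 5 := ⟨n - 5, by omega⟩
  set X := ((t + 5) ^ 2 + 3) / 2 - 2 * (t + 5) + 1 with hX
  set C := (t + 5) * (t + 2) / 2 + 1 with hC
  have hXle : 2 * X ≤ (t + 3) ^ 2 + 1 := by
    have : 0 < (t + 3) ^ 2 := by positivity
    rw [hX, show (t + 5) ^ 2 = (t + 3) ^ 2 + 4 * t + 16 by ring]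
    omega
  have hCge : (t + 5) * (t + 2) + 1 ≤ 2 * C := by
    have := Nat.lt_mul_div_succ ((t + 5) * (t + 2)) (show 0 < 2 by norm_num)
    rw [hC]
    omega
  have hpoly : 6 * ((t + 3) ^ 2 + 1) * ((t + 3) ^ 2 + 4) ≤ 7 * ((t + 5) * (t + 2) + 1) ^ 2 := by
    nlinarith
  have hf4 : 2 * f4 (t + 5) ≤ (t + 3) * X * ((t + 3) ^ 2 + 4) := two_mul_f4_le (t + 5)
  have hf1 : 2 * f1 (t + 5) = (t + 3) * (2 * C) ^ 2 := two_mul_f1 (t + 5)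
  suffices 2 * (12 * f4 (t + 5)) ≤ 2 * (7 * f1 (t + 5)) by omega
  calc 2 * (12 * f4 (t + 5)) ≤ 12 * ((t + 3) * X * ((t + 3) ^ 2 + 4)) := by omega
    _ = (t + 3) * (6 * (2 * X) * ((t + 3) ^ 2 + 4)) := by ring
    _ ≤ (t + 3) * (6 * ((t + 3) ^ 2 + 1) * ((t + 3) ^ 2 + 4)) := by gcongr
    _ ≤ (t + 3) * (7 * ((t + 5) * (t + 2) + 1) ^ 2) := by gcongr
    _ ≤ (t + 3) * (7 * (2 * C) ^ 2) := by gcongr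
    _ = 2 * (7 * f1 (t + 5)) := by rw [mul_left_comm 2, hf1]; ring

theorem six_mul_mul_pow_le_f4Row {n j k : ℕ} (hk : 4 * j ≤ k) (hj : 3 * j ≤ n - 1)
    (hB : k * (3 * j) ≤ (n ^ 2 + 3) / 2 - 2 * n + 1) : 6 * k * j ^ 3 ≤ f4Row n k := by
  have hsub : Ico (k * j) (k * (3 * j)) ⊆
      range (min (k * (n - 1)) ((n ^ 2 + 3) / 2 - 2 * n) + 1) := by
    intro N hN
    rw [mem_Ico] at hN
    rw [mem_range, Nat.lt_succ_iff, le_min_iff]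
    exact ⟨by nlinarith [Nat.mul_le_mul_left k hj], by omega⟩
  have hcard : #(Ico (k * j) (k * (3 * j))) = 2 * k * j := by
    rw [Nat.card_Ico, ← Nat.mul_sub, show 3 * j - j = 2 * j by omega]; ring
  calc 6 * k * j ^ 3 = #(Ico (k * j) (k * (3 * j))) * (3 * j ^ 2) := by rw [hcard]; ring
    _ ≤ ∑ N ∈ Ico (k * j) (k * (3 * j)), Mfun N k :=
        card_nsmul_le_sum _ _ _ fun N hN => three_mul_sq_le_Mfun hk (mem_Ico.mp hN).1
          (mem_Ico.mp hN).2
    _ ≤ ∑ N ∈ Ico (k * j) (k * (3 * j)), (Mfun N k + 1) := sum_le_sum fun N _ => Nat.le_succ _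
    _ ≤ f4Row n k := sum_le_sum_of_subset hsub

theorem pow_five_le_f4 {n j : ℕ} (hj : 7 * j ≤ n - 2)
    (hB : 21 * j ^ 2 ≤ (n ^ 2 + 3) / 2 - 2 * n + 1) : 144 * j ^ 5 ≤ f4 n := by
  have hrow : ∀ k ∈ Ico (4 * j) (7 * j), 24 * j ^ 4 ≤ f4Row n k := by
    intro k hk
    rw [mem_Ico] at hk
    calc 24 * j ^ 4 = 6 * (4 * j) * j ^ 3 := by ring
      _ ≤ 6 * k * j ^ 3 := by gcongr; exact hk.1
      _ ≤ f4Row n k := six_mul_mul_pow_le_f4Row hk.1 (by omega)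
          (le_trans (by nlinarith) hB)
  calc 144 * j ^ 5 = 2 * (#(Ico (4 * j) (7 * j)) * (24 * j ^ 4)) := by
        rw [Nat.card_Ico, show 7 * j - 4 * j = 3 * j by omega]; ring
    _ ≤ 2 * ∑ k ∈ Ico (4 * j) (7 * j), f4Row n k := by
        gcongr; exact card_nsmul_le_sum _ _ _ hrow
    _ ≤ 2 * ∑ k ∈ range (n - 2), f4Row n k := by
        gcongr
        intro k hk
        rw [mem_Ico] at hk
        rw [mem_range]
        omega
    _ = f4 n := (f4_eq_two_mul_sum_f4Row n).symm

theorem f1_le_192_mul_f4 (n : ℕ) (hn : 80 ≤ n) : f1 n ≤ 192 * f4 n := by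
  set j := n / 8 with hj
  have hj10 : 10 ≤ j := by omega
  have h8n : 8 * j ≤ n := by omega
  have hn8 : n < 8 * (j + 1) := by omega
  have hB : 21 * j ^ 2 ≤ (n ^ 2 + 3) / 2 - 2 * n + 1 := by
    have : n ^ 2 + 2 ≤ 2 * ((n ^ 2 + 3) / 2) := by omega
    have : 42 * j ^ 2 + 4 * n ≤ n ^ 2 := by nlinarith [Nat.mul_le_mul h8n h8n]
    omega
  have hf4 := pow_five_le_f4 (show 7 * j ≤ n - 2 by omega) hB
  have hf1 := two_mul_f1_le n
  have hn5 : n ^ 5 ≤ (8 * (j + 1)) ^ 5 := Nat.pow_le_pow_left hn8.le 5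
  -- `(1 + 1/j)^5 ≤ (11/10)^5 < 27/16` once `j ≥ 10`
  have hj5 : (10 * (j + 1)) ^ 5 ≤ (11 * j) ^ 5 := Nat.pow_le_pow_left (by omega) 5
  rw [mul_pow] at hn5 hj5
  nlinarith

/-- There are constants `0 < c₁ < c₂ < 1` (one may take `c₁ = 1/192`, `c₂ = 7/12`) with
`c₁ f₁(n) ≤ f₄(n) ≤ c₂ f₁(n)` for all sufficiently large `n`. -/
theorem stmt17 :
    ∃ c₁ c₂ : ℝ, 0 < c₁ ∧ c₁ < c₂ ∧ c₂ < 1 ∧ c₁ = 1 / 192 ∧ c₂ = 7 / 12 ∧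
      ∃ n₀ : ℕ, ∀ n ≥ n₀, c₁ * (f1 n : ℝ) ≤ (f4 n : ℝ) ∧ (f4 n : ℝ) ≤ c₂ * (f1 n : ℝ) := by
  refine ⟨1 / 192, 7 / 12, by norm_num, by norm_num, by norm_num, rfl, rfl, 80,
    fun n hn => ⟨?_, ?_⟩⟩
  · have : (f1 n : ℝ) ≤ 192 * f4 n := by exact_mod_cast f1_le_192_mul_f4 n hn
    linarith
  · have : (12 * f4 n : ℝ) ≤ 7 * f1 n := by exact_mod_cast twelve_mul_f4_le n (by omega)
    linarith
end
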